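/- For all real r with 0 < |r| < π, one has r·csc(r) = 1 - 2·∑_{j=1}^∞ (-1)^j · r²/((jπ)² - r²). -/

import Mathlib

open Real

noncomputable section CscAux

namespace CscPF

instance : Fact (0 < 2 * π) := ⟨by positivity⟩

lemma key_integral {c : ℝ} (hc : c ≠ 0) :
    ∫ x in (-π)..π, Complex.exp ((c : ℂ) * Complex.I * x) =
      ((2 * Real.sin (c * π) / c : ℝ) : ℂ) := by
  have hc' : (c : ℂ) * Complex.I ≠ 0 := by
    simp [Complex.ofReal_ne_zero.mpr hc, Complex.I_ne_zero]
  rw [integral_exp_mul_complex hc']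
  have h2 : Complex.exp (((c : ℂ) * π) * Complex.I) -
      Complex.exp (-((c : ℂ) * π) * Complex.I) =
      2 * Complex.I * Complex.sin ((c : ℂ) * π) := by
    rw [Complex.sin]
    have hI : Complex.I * Complex.I = -1 := Complex.I_mul_I
    linear_combination (Complex.exp (((c:ℂ)*π) * Complex.I) -
      Complex.exp (-((c:ℂ)*π) * Complex.I)) * hI
  push_cast [Complex.ofReal_sin]
  rw [div_eq_div_iff hc' (by exact_mod_cast Complex.ofReal_ne_zero.mpr hc)]
  have e1 : (c : ℂ) * Complex.I * ↑π = ((c:ℂ) * π) * Complex.I := by ring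
  have e2 : (c : ℂ) * Complex.I * (-(π:ℂ)) = -((c:ℂ) * π) * Complex.I := by ring
  rw [e1, e2]
  linear_combination (c : ℂ) * h2

/-- the function `t ↦ cos ((r/π) t)` -/
def g (r : ℝ) : ℝ → ℂ := fun t => Complex.cos (((r / π : ℝ) : ℂ) * t)

/-- its Fourier coefficients -/
def cR (r : ℝ) : ℤ → ℝ := fun n =>
  (-1) ^ n * Real.sin r * r / (r ^ 2 - ((n : ℝ) * π) ^ 2)

/-- `g r` as a continuous map on the circle -/
def F (r : ℝ) : C(AddCircle (2 * π), ℂ) :=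
  ⟨AddCircle.liftIco (2 * π) (-π) (g r), by
    apply AddCircle.liftIco_continuous
    · show g r (-π) = g r (-π + 2 * π)
      rw [show -π + 2 * π = π by ring]
      simp only [g]
      rw [show ((r / π : ℝ) : ℂ) * ((-π : ℝ) : ℂ) = -(((r / π : ℝ) : ℂ) * ((π : ℝ) : ℂ)) by
        push_cast; ring, Complex.cos_neg]
    · exact ((Complex.continuous_cos.comp (continuous_const.mul
        Complex.continuous_ofReal))).continuousOn⟩

lemma hn_ne (r : ℝ) (h0 : 0 < |r|) (hπ : |r| < π) (m : ℤ) : r / π ≠ (m : ℝ) := by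
  have hπ0 := pi_pos
  have ha1 : |r / π| < 1 := by
    rw [abs_div, abs_of_pos hπ0]; exact (div_lt_one hπ0).mpr hπ
  have ha0 : r / π ≠ 0 := div_ne_zero (abs_pos.mp h0) hπ0.ne'
  rcases eq_or_ne m 0 with hm | hm
  · simpa [hm] using ha0
  · intro h
    have : (1 : ℝ) ≤ |(m : ℝ)| := by
      rw [← Int.cast_abs]; exact_mod_cast Int.one_le_abs hm
    rw [h] at ha1; linarith

lemma coeff (r : ℝ) (h0 : 0 < |r|) (hπ : |r| < π) (n : ℤ) :
    fourierCoeff (⇑(F r)) n = ((cR r n : ℝ) : ℂ) := by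
  have hπ0 := pi_pos
  have hπ' : π ≠ 0 := hπ0.ne'
  have hr0 : r ≠ 0 := abs_pos.mp h0
  have hsub : r / π - (n : ℝ) ≠ 0 := sub_ne_zero.mpr (hn_ne r h0 hπ n)
  have hadd : r / π + (n : ℝ) ≠ 0 := by
    have := hn_ne r h0 hπ (-n)
    intro h; apply this; push_cast; linarith
  have hden : r ^ 2 - ((n : ℝ) * π) ^ 2 ≠ 0 := by
    intro h
    have h2 : (r - ↑n * π) * (r + ↑n * π) = 0 := by linear_combination h
    rcases mul_eq_zero.mp h2 with h3 | h3
    · exact hn_ne r h0 hπ n ((div_eq_iff hπ').mpr (by linarith))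
    · exact hn_ne r h0 hπ (-n) (by push_cast; exact (div_eq_iff hπ').mpr (by linarith))
  rw [show ⇑(F r) = AddCircle.liftIco (2 * π) (-π) (g r) from rfl]
  rw [fourierCoeff_liftIco_eq, fourierCoeffOn_eq_integral]
  simp_rw [fourier_coe_apply, smul_eq_mul]
  have harg : ∀ x : ℝ, Complex.exp (2 * ↑π * Complex.I * ↑(-n) * ↑x /
        ((((-π + 2 * π) - -π : ℝ)) : ℂ)) * g r x
      = (Complex.exp (((r / π - n : ℝ) : ℂ) * Complex.I * x) +
          Complex.exp (((-(r / π + n) : ℝ) : ℂ) * Complex.I * x)) / 2 := by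
    intro x
    simp only [g]
    rw [Complex.cos]
    have h1 : 2 * (π : ℂ) * Complex.I * ((-n : ℤ) : ℂ) * (x : ℂ) /
        ((((-π + 2 * π) - -π : ℝ)) : ℂ) = (-(n : ℂ)) * Complex.I * (x : ℂ) := by
      have : ((((-π + 2 * π) - -π : ℝ)) : ℂ) = 2 * (π : ℂ) := by push_cast; ring
      rw [this]
      have h2π : 2 * (π : ℂ) ≠ 0 := by
        simp [Complex.ofReal_ne_zero.mpr hπ']
      field_simp
      push_cast
      ring
    rw [h1, ← mul_div_assoc, mul_add, ← Complex.exp_add, ← Complex.exp_add]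
    congr 2
    · push_cast; ring
    · push_cast; ring
  rw [intervalIntegral.integral_congr (g := fun x : ℝ =>
      (Complex.exp (((r / π - n : ℝ) : ℂ) * Complex.I * x) +
        Complex.exp (((-(r / π + n) : ℝ) : ℂ) * Complex.I * x)) / 2)
      (fun x _ => harg x)]
  have hb : -π + 2 * π = π := by ring
  rw [hb]
  have i1 : IntervalIntegrable
      (fun x : ℝ => Complex.exp (((r / π - n : ℝ) : ℂ) * Complex.I * x)) MeasureTheory.volume (-π) π :=
    (Complex.continuous_exp.comp (continuous_const.mul Complex.continuous_ofReal)).intervalIntegrable _ _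
  have i2 : IntervalIntegrable
      (fun x : ℝ => Complex.exp (((-(r / π + n) : ℝ) : ℂ) * Complex.I * x)) MeasureTheory.volume (-π) π :=
    (Complex.continuous_exp.comp (continuous_const.mul Complex.continuous_ofReal)).intervalIntegrable _ _
  rw [intervalIntegral.integral_div, intervalIntegral.integral_add i1 i2,
    key_integral hsub, key_integral (neg_ne_zero.mpr hadd)]
  rw [Complex.real_smul]
  norm_cast
  have hsub' : r - ↑n * π ≠ 0 := fun h => hden (by linear_combination (r + ↑n * π) * h)
  have hadd' : r + ↑n * π ≠ 0 := fun h => hden (by linear_combination (r - ↑n * π) * h)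
  rw [show (r / π - ↑n) * π = r - ↑n * π by field_simp <;> ring,
    Real.sin_sub_int_mul_pi,
    show (-(r / π + ↑n)) * π = -(r + ↑n * π) by field_simp <;> ring,
    Real.sin_neg, Real.sin_add_int_mul_pi]
  simp only [cR]
  have hA : -(π * ↑n) + r ≠ 0 := fun h => hsub' (by linarith)
  have hB : -(π * ↑n) - r ≠ 0 := fun h => hadd' (by linarith)
  have hsub'' : r / π - ↑n = (r - ↑n * π) / π := by field_simp
  have hadd'' : r / π + ↑n = (r + ↑n * π) / π := by field_simp
  rw [hsub'', hadd'', show π - -π = 2 * π by ring,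
    show r ^ 2 - (↑n * π) ^ 2 = (r - ↑n * π) * (r + ↑n * π) by ring]
  have hX : r - π * ↑n ≠ 0 := fun h => hsub' (by linarith)
  have hY : r + π * ↑n ≠ 0 := fun h => hadd' (by linarith)
  field_simp
  ring

lemma cR_neg (r : ℝ) (n : ℤ) : cR r (-n) = cR r n := by
  have h1 : ((-1 : ℝ)) ^ (-n) = (-1 : ℝ) ^ n := by
    rw [zpow_neg, ← inv_zpow, inv_neg, inv_one]
  simp only [cR, Int.cast_neg, h1, neg_mul, neg_sq]

lemma summable_cR (r : ℝ) (h0 : 0 < |r|) (hπ : |r| < π) : Summable (cR r) := by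
  have hπ0 := pi_pos
  have hr2 : r ^ 2 < π ^ 2 := by
    have := abs_lt.mp hπ
    nlinarith [abs_nonneg r, sq_abs r]
  have hnat : Summable (fun n : ℕ => cR r n) := by
    have hK : Summable (fun n : ℕ => |Real.sin r * r| * 2 / π ^ 2 * (1 / (n : ℝ) ^ 2)) :=
      ((Real.summable_one_div_nat_pow).mpr one_lt_two).mul_left _
    apply Summable.of_norm_bounded_eventually_nat hK
    filter_upwards [Filter.eventually_ge_atTop 2] with n hn
    have hn2 : (2 : ℝ) ≤ (n : ℝ) := by exact_mod_cast hn
    have hd : 0 < ((n : ℝ) * π) ^ 2 - r ^ 2 := by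
      nlinarith [mul_le_mul_of_nonneg_right hn2 hπ0.le]
    have hnum : |(-1 : ℝ) ^ ((n : ℕ) : ℤ) * Real.sin r * r| = |Real.sin r * r| := by
      rw [mul_assoc, abs_mul, zpow_natCast, abs_pow, abs_neg, abs_one, one_pow, one_mul]
    have habs : ‖cR r (n : ℤ)‖ = |Real.sin r * r| / (((n : ℝ) * π) ^ 2 - r ^ 2) := by
      rw [Real.norm_eq_abs]
      simp only [cR, Int.cast_natCast]
      rw [abs_div, hnum, abs_sub_comm, abs_of_pos hd]
    rw [habs]
    calc |Real.sin r * r| / (((n : ℝ) * π) ^ 2 - r ^ 2)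
        ≤ |Real.sin r * r| / ((n : ℝ) ^ 2 * π ^ 2 / 2) := by
          gcongr
          nlinarith [mul_le_mul_of_nonneg_right hn2 hπ0.le]
      _ = |Real.sin r * r| * 2 / π ^ 2 * (1 / (n : ℝ) ^ 2) := by
          have hnn : (0:ℝ) < (n : ℝ) ^ 2 * π ^ 2 / 2 := by positivity
          rw [mul_one_div, div_eq_div_iff hnn.ne' (by positivity : ((n:ℝ)^2) ≠ 0)]
          field_simp
  rw [summable_int_iff_summable_nat_and_neg]
  refine ⟨hnat, ?_⟩
  simpa only [cR_neg] using hnat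

lemma F_zero (r : ℝ) : (F r) 0 = 1 := by
  show AddCircle.liftIco (2 * π) (-π) (g r) 0 = 1
  have hπ0 := pi_pos
  have h0m : (0 : ℝ) ∈ Set.Ico (-π) (-π + 2 * π) := ⟨by linarith, by linarith⟩
  have hcoe : ((0 : ℝ) : AddCircle (2 * π)) = 0 := by norm_cast
  rw [← hcoe, AddCircle.liftIco_coe_apply h0m]
  simp [g]

end CscPF

end CscAux

/-- Mittag-Leffler expansion of the cosecant: for `0 < |r| < π`,
`r·csc r = 1 - 2·∑_{j≥1} (-1)^j r² / ((jπ)² - r²)`. -/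
theorem mul_csc_eq_partial_fraction (r : ℝ) (h0 : 0 < |r|) (hπ : |r| < π) :
    r / Real.sin r =
      1 - 2 * ∑' j : ℕ, (-1 : ℝ) ^ (j + 1) * r ^ 2 / (((j + 1 : ℝ) * π) ^ 2 - r ^ 2) := by
  have hπ0 := pi_pos
  have hr0 : r ≠ 0 := abs_pos.mp h0
  obtain ⟨hlo, hhi⟩ := abs_lt.mp hπ
  have hsin : Real.sin r ≠ 0 := by
    rcases lt_or_gt_of_ne hr0 with hneg | hpos
    · have := Real.sin_pos_of_pos_of_lt_pi (x := -r) (by linarith) (by linarith)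
      rw [Real.sin_neg] at this; linarith
    · exact (Real.sin_pos_of_pos_of_lt_pi hpos hhi).ne'
  have hsummable : Summable (fourierCoeff (⇑(CscPF.F r))) := by
    rw [summable_congr (fun n => CscPF.coeff r h0 hπ n)]
    exact Complex.summable_ofReal.mpr (CscPF.summable_cR r h0 hπ)
  have hsum := has_pointwise_sum_fourier_series_of_summable hsummable (0 : AddCircle (2 * π))
  simp_rw [fourier_eval_zero, smul_eq_mul, mul_one] at hsum
  rw [CscPF.F_zero r, funext (CscPF.coeff r h0 hπ),
    show (1 : ℂ) = ((1 : ℝ) : ℂ) by norm_num] at hsum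
  have hR : HasSum (CscPF.cR r) 1 := Complex.hasSum_ofReal.mp hsum
  have h2 := hR.nat_add_neg
  simp only [CscPF.cR_neg] at h2
  have hc0 : CscPF.cR r 0 = Real.sin r / r := by
    simp only [CscPF.cR, zpow_zero, one_mul, Int.cast_zero, zero_mul]
    field_simp
    ring
  have h2' : HasSum (fun n : ℕ => 2 * CscPF.cR r n) (1 + Real.sin r / r) := by
    rw [← hc0]
    simpa only [two_mul] using h2
  have h3 := (hasSum_nat_add_iff' 1).mpr h2'
  simp only [Finset.range_one, Finset.sum_singleton, Nat.cast_zero, hc0] at h3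
  have h4 : HasSum (fun n : ℕ => -r / (2 * Real.sin r) * (2 * CscPF.cR r (↑(n + 1))))
      (-r / (2 * Real.sin r) * (1 + Real.sin r / r - 2 * (Real.sin r / r))) := h3.mul_left _
  have hterm : (fun n : ℕ => -r / (2 * Real.sin r) * (2 * CscPF.cR r (↑(n + 1)))) =
      fun j : ℕ => (-1 : ℝ) ^ (j + 1) * r ^ 2 / (((j + 1 : ℝ) * π) ^ 2 - r ^ 2) := by
    funext j
    have hr2 : r ^ 2 < π ^ 2 := by nlinarith
    have hj1 : π ≤ ((j : ℝ) + 1) * π := by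
      nlinarith [Nat.cast_nonneg (α := ℝ) j]
    have hd : (((j : ℝ) + 1) * π) ^ 2 - r ^ 2 ≠ 0 := by nlinarith
    have hd' : r ^ 2 - (((j : ℝ) + 1) * π) ^ 2 ≠ 0 := by
      intro h; exact hd (by linarith)
    simp only [CscPF.cR, zpow_natCast]
    push_cast
    field_simp
    rw [← div_neg]
    ring
  rw [hterm] at h4
  rw [h4.tsum_eq]
  field_simp
  ring
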